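/- arXiv:2511.21159 — 6 statements merged into one kernel-verified Lean document; each statement's English description precedes it below -/
import Mathlib

section
/- For the 1-dimensional spherical wave f_a(x) = e^{2πi a|x|} with a ∈ ℝ, the natural autocorrelation exists and equals η(x) = cos(2πax); explicitly, lim_{L→∞} (1/(2L)) ∫_{-L}^{L} e^{2πi|y|} e^{-2πi|y-x|} dy = cos(2πx) for a = 1, and by scaling η(x) = cos(2πax) for general a. -/
open MeasureTheory Filter Real

/-- The natural autocorrelation of the one-dimensional spherical wave
`f_a(x) = e^{2πi a |x|}` along the intervals `[-L, L]` exists and equals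
`η(x) = cos(2π a x)`. -/
theorem spherical_wave_1d_autocorrelation (a : ℝ) (x : ℝ) :
    Tendsto (fun L : ℝ =>
        ((1 / (2 * L) : ℝ) : ℂ) *
          ∫ y in (-L)..L,
            Complex.exp (2 * Real.pi * Complex.I * ((a * |y| : ℝ) : ℂ)) *
              (starRingEnd ℂ)
                (Complex.exp (2 * Real.pi * Complex.I * ((a * |y - x| : ℝ) : ℂ))))
      atTop (nhds ((Real.cos (2 * Real.pi * a * x) : ℝ) : ℂ)) := by
  set g : ℝ → ℂ := fun y =>
    Complex.exp (2 * Real.pi * Complex.I * ((a * |y| : ℝ) : ℂ)) *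
      (starRingEnd ℂ) (Complex.exp (2 * Real.pi * Complex.I * ((a * |y - x| : ℝ) : ℂ)))
    with hgdef
  have hgform : ∀ y, g y =
      Complex.exp (2 * Real.pi * Complex.I * ((a * |y| - a * |y - x| : ℝ) : ℂ)) := by
    intro y
    rw [hgdef]
    simp only
    rw [← Complex.exp_conj, ← Complex.exp_add]
    congr 1
    simp [map_mul, Complex.conj_I, Complex.conj_ofReal, map_ofNat]
    ring
  have hcont : Continuous g := by
    have : g = fun y =>
        Complex.exp (2 * Real.pi * Complex.I * ((a * |y| - a * |y - x| : ℝ) : ℂ)) :=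
      funext hgform
    rw [this]
    fun_prop
  set e1 : ℂ := Complex.exp (2 * Real.pi * Complex.I * ((a * x : ℝ) : ℂ)) with he1
  set e2 : ℂ := Complex.exp (2 * Real.pi * Complex.I * ((-(a * x) : ℝ) : ℂ)) with he2
  set C : ℂ := ∫ y in (-|x|)..(|x|), g y with hC
  -- the split formula
  have hsplit : ∀ L : ℝ, |x| ≤ L →
      (∫ y in (-L)..L, g y) = (((L - |x| : ℝ)) : ℂ) * (e1 + e2) + C := by
    intro L hL
    have hI1 : IntervalIntegrable g volume (-L) (-|x|) := hcont.intervalIntegrable _ _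
    have hI2 : IntervalIntegrable g volume (-|x|) (|x|) := hcont.intervalIntegrable _ _
    have hI3 : IntervalIntegrable g volume (|x|) L := hcont.intervalIntegrable _ _
    have h12 := intervalIntegral.integral_add_adjacent_intervals hI1 hI2
    have h123 := intervalIntegral.integral_add_adjacent_intervals (hI1.trans hI2) hI3
    have hright : (∫ y in (|x|)..L, g y) = (L - |x| : ℝ) • e1 := by
      rw [intervalIntegral.integral_congr (g := fun _ => e1), intervalIntegral.integral_const]
      intro y hy
      rw [Set.uIcc_of_le hL] at hy
      obtain ⟨hy1, hy2⟩ := hy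
      have hy0 : 0 ≤ y := le_trans (abs_nonneg x) hy1
      have hyx : x ≤ y := le_trans (le_abs_self x) hy1
      rw [hgform, he1]
      congr 1
      congr 1
      rw [abs_of_nonneg hy0, abs_of_nonneg (by linarith : (0:ℝ) ≤ y - x)]
      ring
    have hleft : (∫ y in (-L)..(-|x|), g y) = (L - |x| : ℝ) • e2 := by
      have h' : (-L : ℝ) ≤ -|x| := by linarith
      rw [intervalIntegral.integral_congr (g := fun _ => e2), intervalIntegral.integral_const]
      · congr 1
        ring
      intro y hy
      rw [Set.uIcc_of_le h'] at hy
      obtain ⟨hy1, hy2⟩ := hy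
      have hy0 : y ≤ 0 := le_trans hy2 (by simpa using abs_nonneg x)
      have hyx : y ≤ x := le_trans hy2 (by simpa using neg_abs_le x)
      rw [hgform, he2]
      congr 1
      congr 1
      rw [abs_of_nonpos hy0, abs_of_nonpos (by linarith : y - x ≤ 0)]
      ring
    rw [← h123, ← h12, hright, hleft, ← hC]
    push_cast
    rw [Complex.real_smul, Complex.real_smul]
    push_cast
    ring
  -- the limit
  have h0 : Tendsto (fun L : ℝ => (1 / (2 * L) : ℝ)) atTop (nhds 0) := by
    have h := Filter.Tendsto.const_mul (2⁻¹ : ℝ) tendsto_inv_atTop_zero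
    simpa [one_div, mul_inv, mul_comm] using h
  have hr1 : Tendsto (fun L : ℝ => ((L - |x|) / (2 * L) : ℝ)) atTop (nhds (1 / 2)) := by
    have : Tendsto (fun L : ℝ => (1 / 2 - |x| * (1 / (2 * L)) : ℝ)) atTop (nhds (1 / 2)) := by
      simpa using tendsto_const_nhds.sub ((h0.const_mul |x|))
    refine this.congr' ?_
    filter_upwards [eventually_gt_atTop (0 : ℝ)] with L hL
    field_simp
  have hcos : ((Real.cos (2 * Real.pi * a * x) : ℝ) : ℂ) = ((1/2 : ℝ) : ℂ) * (e1 + e2) := by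
    have h1 : e1 = Complex.exp (((2 * Real.pi * a * x : ℝ) : ℂ) * Complex.I) := by
      rw [he1]; congr 1; push_cast; ring
    have h2 : e2 = Complex.exp (-((2 * Real.pi * a * x : ℝ) : ℂ) * Complex.I) := by
      rw [he2]; congr 1; push_cast; ring
    rw [Complex.ofReal_cos, h1, h2, ← Complex.two_cos]
    push_cast
    ring
  have hmain : Tendsto
      (fun L : ℝ => (((L - |x|) / (2 * L) : ℝ) : ℂ) * (e1 + e2) + ((1 / (2 * L) : ℝ) : ℂ) * C)
      atTop (nhds (((1/2 : ℝ) : ℂ) * (e1 + e2) + ((0 : ℝ) : ℂ) * C)) := by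
    exact (((Complex.continuous_ofReal.tendsto _).comp hr1).mul_const _).add
      (((Complex.continuous_ofReal.tendsto _).comp h0).mul_const _)
  have hval : ((Real.cos (2 * Real.pi * a * x) : ℝ) : ℂ)
      = ((1/2 : ℝ) : ℂ) * (e1 + e2) + ((0 : ℝ) : ℂ) * C := by
    rw [hcos]; push_cast; ring
  rw [hval]
  refine Tendsto.congr' ?_ hmain
  filter_upwards [eventually_ge_atTop (|x| + 1)] with L hL
  have hL0 : (0 : ℝ) < L := lt_of_lt_of_le (by positivity) hL
  have hxL : |x| ≤ L := by linarith
  rw [hsplit L hxL]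
  push_cast
  field_simp
end

section
/- For a ≠ b in ℝ, the reflected Eberlein convolution of the 1-dimensional spherical waves f_a(x) = e^{2πi a|x|} and f_b(x) = e^{2πi b|x|} vanishes: lim_{L→∞} (1/(2L)) ∫_{-L}^{L} e^{2πi a|y|} e^{-2πi b|y-x|} dy = 0 for every x ∈ ℝ. -/
/-!
Write `e(t) = exp(2πit)`. For `y ≥ |x|` the integrand is `e(bx) e((a - b)y)`, whose integrals
over arbitrary intervals are bounded by `2 / |2π(a - b)|`; on `[0, |x|]` it has modulus one. So
`∫₀^L` stays bounded as `L → ∞`, and `y ↦ -y` turns `∫_{-L}^0` into the same integral with `x`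
replaced by `-x`. The integral over `[-L, L]` is therefore bounded, and its average tends to zero.
-/

open MeasureTheory Filter Real

noncomputable def sphericalWave (a y : ℝ) : ℂ :=
  Complex.exp (2 * π * Complex.I * ((a * |y| : ℝ) : ℂ))

noncomputable def crossIntegrand (a b x y : ℝ) : ℂ :=
  sphericalWave a y * starRingEnd ℂ (sphericalWave b (y - x))

lemma norm_exp_two_pi_I_mul_ofReal (t : ℝ) :
    ‖Complex.exp (2 * π * Complex.I * (t : ℂ))‖ = 1 := by
  simp [Complex.norm_exp]

lemma norm_sphericalWave (a y : ℝ) : ‖sphericalWave a y‖ = 1 :=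
  norm_exp_two_pi_I_mul_ofReal _

lemma continuous_sphericalWave (a : ℝ) : Continuous (sphericalWave a) := by
  unfold sphericalWave; fun_prop

lemma norm_crossIntegrand (a b x y : ℝ) : ‖crossIntegrand a b x y‖ = 1 := by
  simp [crossIntegrand, norm_sphericalWave]

lemma continuous_crossIntegrand (a b x : ℝ) : Continuous (crossIntegrand a b x) :=
  (continuous_sphericalWave a).mul
    (Complex.continuous_conj.comp ((continuous_sphericalWave b).comp (continuous_sub_right x)))

lemma crossIntegrand_neg (a b x y : ℝ) :
    crossIntegrand a b x (-y) = crossIntegrand a b (-x) y := by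
  simp only [crossIntegrand, sphericalWave, abs_neg, sub_neg_eq_add, ← neg_add', abs_neg]

lemma crossIntegrand_of_abs_le {a b x y : ℝ} (h : |x| ≤ y) :
    crossIntegrand a b x y =
      Complex.exp (2 * π * Complex.I * ((b * x : ℝ) : ℂ)) *
        Complex.exp (((2 * π * (a - b) : ℝ) : ℂ) * Complex.I * y) := by
  have hy : 0 ≤ y := (abs_nonneg x).trans h
  have hyx : 0 ≤ y - x := sub_nonneg.2 ((le_abs_self x).trans h)
  simp only [crossIntegrand, sphericalWave, abs_of_nonneg hy, abs_of_nonneg hyx,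
    ← Complex.exp_conj, ← Complex.exp_add, map_mul, Complex.conj_ofReal, Complex.conj_I, map_ofNat]
  congr 1
  push_cast
  ring

lemma norm_integral_exp_ofReal_mul_I_le {ω : ℝ} (hω : ω ≠ 0) (u v : ℝ) :
    ‖∫ t in u..v, Complex.exp (ω * Complex.I * t)‖ ≤ 2 / |ω| := by
  have hc : (ω : ℂ) * Complex.I ≠ 0 :=
    mul_ne_zero (Complex.ofReal_ne_zero.2 hω) Complex.I_ne_zero
  have hexp : ∀ t : ℝ, ‖Complex.exp (ω * Complex.I * t)‖ = 1 := fun t => by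
    rw [mul_right_comm, ← Complex.ofReal_mul]; exact Complex.norm_exp_ofReal_mul_I _
  rw [integral_exp_mul_complex hc, norm_div, norm_mul, Complex.norm_I, mul_one,
    Complex.norm_real, Real.norm_eq_abs]
  gcongr
  calc _ ≤ ‖Complex.exp (ω * Complex.I * v)‖ + ‖Complex.exp (ω * Complex.I * u)‖ :=
        norm_sub_le _ _
    _ = 2 := by rw [hexp, hexp]; norm_num

lemma norm_integral_crossIntegrand_le {a b : ℝ} (hab : a ≠ b) {x L : ℝ} (hL : |x| ≤ L) :
    ‖∫ y in 0..L, crossIntegrand a b x y‖ ≤ |x| + 2 / |2 * π * (a - b)| := by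
  have hint := fun u v => (continuous_crossIntegrand a b x).intervalIntegrable (μ := volume) u v
  have hω : 2 * π * (a - b) ≠ 0 := by
    have := sub_ne_zero.2 hab; positivity
  rw [← intervalIntegral.integral_add_adjacent_intervals (hint 0 |x|) (hint |x| L)]
  have hnear : ‖∫ y in 0..|x|, crossIntegrand a b x y‖ ≤ |x| := by
    simpa [norm_crossIntegrand] using intervalIntegral.norm_integral_le_of_norm_le_const
      (a := 0) (b := |x|) (fun y _ => (norm_crossIntegrand a b x y).le)
  have hfar : ‖∫ y in |x|..L, crossIntegrand a b x y‖ ≤ 2 / |2 * π * (a - b)| := by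
    rw [intervalIntegral.integral_congr
        (g := fun y => _ * Complex.exp (((2 * π * (a - b) : ℝ) : ℂ) * Complex.I * y))
        (fun y hy => crossIntegrand_of_abs_le (Set.uIcc_of_le hL ▸ hy).1),
      intervalIntegral.integral_const_mul, norm_mul, norm_exp_two_pi_I_mul_ofReal, one_mul]
    exact norm_integral_exp_ofReal_mul_I_le hω _ _
  exact (norm_add_le _ _).trans (add_le_add hnear hfar)

lemma integral_crossIntegrand_eq_add (a b x L : ℝ) :
    ∫ y in (-L)..L, crossIntegrand a b x y =
      (∫ y in 0..L, crossIntegrand a b (-x) y) + ∫ y in 0..L, crossIntegrand a b x y := by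
  have hint := fun u v => (continuous_crossIntegrand a b x).intervalIntegrable (μ := volume) u v
  rw [← intervalIntegral.integral_add_adjacent_intervals (hint (-L) 0) (hint 0 L)]
  congr 1
  simp only [← crossIntegrand_neg, intervalIntegral.integral_comp_neg, neg_zero]

lemma isBoundedUnder_norm_integral_crossIntegrand {a b : ℝ} (hab : a ≠ b) (x : ℝ) :
    IsBoundedUnder (· ≤ ·) atTop fun L => ‖∫ y in (-L)..L, crossIntegrand a b x y‖ := by
  refine isBoundedUnder_of_eventually_le (a := 2 * (|x| + 2 / |2 * π * (a - b)|)) ?_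
  filter_upwards [eventually_ge_atTop |x|] with L hL
  rw [integral_crossIntegrand_eq_add, two_mul]
  refine (norm_add_le _ _).trans (add_le_add ?_ (norm_integral_crossIntegrand_le hab hL))
  simpa using norm_integral_crossIntegrand_le hab (x := -x) (by simpa using hL)

/-- For `a ≠ b`, the reflected Eberlein convolution of the one-dimensional spherical
waves `f_a(x) = e^{2πi a|x|}` and `f_b(x) = e^{2πi b|x|}` along the intervals `[-L, L]`
vanishes at every point `x`. -/
theorem spherical_wave_1d_cross_convolution_vanishes (a b : ℝ) (hab : a ≠ b) (x : ℝ) :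
    Tendsto (fun L : ℝ =>
        ((1 / (2 * L) : ℝ) : ℂ) *
          ∫ y in (-L)..L,
            Complex.exp (2 * Real.pi * Complex.I * ((a * |y| : ℝ) : ℂ)) *
              (starRingEnd ℂ)
                (Complex.exp (2 * Real.pi * Complex.I * ((b * |y - x| : ℝ) : ℂ))))
      atTop (nhds (0 : ℂ)) := by
  have hinv : Tendsto (fun L : ℝ => ((1 / (2 * L) : ℝ) : ℂ)) atTop (nhds 0) :=
    ((tendsto_const_nhds (x := (1 : ℝ))).div_atTop
      (tendsto_id.const_mul_atTop two_pos)).ofReal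
  exact hinv.zero_mul_isBoundedUnder_le (isBoundedUnder_norm_integral_crossIntegrand hab x)
end

section
/- Let f, g : ℝ^d → ℂ be essentially bounded measurable functions and let (A_n) be a Følner sequence. Then for every x ∈ ℝ^d, lim_{n→∞} (1/vol(A_n)) ∫_{A_n} f(s) conj(g(s-x)) ds exists if and only if lim_{n→∞} (1/vol(A_n)) ∫_{ℝ^d} (1_{A_n} f)(s) conj((1_{A_n} g)(s-x)) ds exists, and in that case they are equal. -/
open MeasureTheory Filter
open scoped Pointwise symmDiff

/-!
Pointwise, `1_A f (s) * conj (1_A g (s - x))` is `f s * conj (g (s - x))` cut down to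
`A ∩ (x +ᵥ A)`. Hence the two averages differ by the average over `A \ (x +ᵥ A)` of a function
bounded by `‖f‖∞ ‖g‖∞`, which is at most `‖f‖∞ ‖g‖∞ vol (A ∆ (x +ᵥ A)) / vol A`; this tends to
zero along a Følner sequence.
-/

section

variable {G 𝕜 : Type*} [AddCommGroup G] [RCLike 𝕜]

theorem vadd_set_eq_preimage_sub (A : Set G) (x : G) : x +ᵥ A = (· - x) ⁻¹' A := by
  ext s
  simp [Set.mem_vadd_set_iff_neg_vadd_mem, sub_eq_neg_add]

theorem indicator_mul_conj_indicator_sub (A : Set G) (f g : G → 𝕜) (x s : G) :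
    A.indicator f s * starRingEnd 𝕜 (A.indicator g (s - x)) =
      (A ∩ (x +ᵥ A)).indicator (fun s => f s * starRingEnd 𝕜 (g (s - x))) s := by
  rw [Set.inter_indicator_mul, vadd_set_eq_preimage_sub, ← Set.indicator_comp_right (· - x),
    ← Function.comp_apply (f := starRingEnd 𝕜),
    ← Set.indicator_comp_of_zero (map_zero (starRingEnd 𝕜))]
  rfl

end

section

variable {G 𝕜 : Type*} [MeasurableSpace G] [AddCommGroup G] [MeasurableAdd G] [RCLike 𝕜]
  {μ : Measure G} [μ.IsAddRightInvariant]

theorem MeasureTheory.MemLp.mul_conj_comp_sub_top {f g : G → 𝕜} (hf : MemLp f ⊤ μ)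
    (hg : MemLp g ⊤ μ) (x : G) :
    MemLp (fun s => f s * starRingEnd 𝕜 (g (s - x))) ⊤ μ := by
  have hgx : MemLp (fun s => g (s - x)) ⊤ μ :=
    hg.comp_measurePreserving (measurePreserving_sub_right μ x)
  exact hgx.star.mul' hf

theorem norm_setIntegral_mul_conj_sub_integral_indicator_le {f g : G → 𝕜}
    (hf : MemLp f ⊤ μ) (hg : MemLp g ⊤ μ) {A : Set G} (hA : MeasurableSet A) (hAfin : μ A ≠ ⊤)
    (x : G) :
    ‖(∫ s in A, f s * starRingEnd 𝕜 (g (s - x)) ∂μ) -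
        ∫ s, A.indicator f s * starRingEnd 𝕜 (A.indicator g (s - x)) ∂μ‖ ≤
      lpNorm (fun s => f s * starRingEnd 𝕜 (g (s - x))) ⊤ μ * μ.real (A \ (x +ᵥ A)) := by
  set h := fun s => f s * starRingEnd 𝕜 (g (s - x))
  have hh : MemLp h ⊤ μ := hf.mul_conj_comp_sub_top hg x
  have hint : IntegrableOn h A μ :=
    Measure.integrableOn_of_bounded hAfin hh.1 (ae_restrict_of_ae (ae_le_lpNorm_exponent_top hh))
  have hsplit := integral_inter_add_sdiff (t := x +ᵥ A) (hA.const_vadd x) hint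
  rw [funext (indicator_mul_conj_indicator_sub A f g x),
    integral_indicator (hA.inter (hA.const_vadd x)), ← hsplit, add_sub_cancel_left]
  exact norm_setIntegral_le_of_norm_le_const_ae
    ((measure_mono Set.sdiff_subset).trans_lt hAfin.lt_top)
    (ae_restrict_of_ae (ae_le_lpNorm_exponent_top hh))

theorem norm_average_mul_conj_sub_average_indicator_le {f g : G → 𝕜}
    (hf : MemLp f ⊤ μ) (hg : MemLp g ⊤ μ) {A : Set G} (hA : MeasurableSet A) (hAfin : μ A ≠ ⊤)
    (x : G) :
    ‖(((μ A).toReal⁻¹ : ℝ) : 𝕜) * (∫ s in A, f s * starRingEnd 𝕜 (g (s - x)) ∂μ) -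
        (((μ A).toReal⁻¹ : ℝ) : 𝕜) *
          ∫ s, A.indicator f s * starRingEnd 𝕜 (A.indicator g (s - x)) ∂μ‖ ≤
      lpNorm (fun s => f s * starRingEnd 𝕜 (g (s - x))) ⊤ μ *
        (μ (A \ (x +ᵥ A)) / μ A).toReal := by
  rw [← mul_sub, norm_mul, RCLike.norm_ofReal, abs_of_nonneg (inv_nonneg.2 ENNReal.toReal_nonneg),
    ENNReal.toReal_div, div_eq_inv_mul, mul_left_comm]
  exact mul_le_mul_of_nonneg_left
    (norm_setIntegral_mul_conj_sub_integral_indicator_le hf hg hA hAfin x)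
    (inv_nonneg.2 ENNReal.toReal_nonneg)

end

theorem exists_tendsto_iff_and_tendsto_of_tendsto_sub_nhds_zero {ι E : Type*} [AddCommGroup E]
    [TopologicalSpace E] [IsTopologicalAddGroup E] {l : Filter ι} {F G : ι → E}
    (h : Tendsto (fun i => F i - G i) l (nhds 0)) :
    ((∃ a, Tendsto F l (nhds a)) ↔ ∃ a, Tendsto G l (nhds a)) ∧
      ∀ a, Tendsto F l (nhds a) → Tendsto G l (nhds a) := by
  have hGF : ∀ a, Tendsto F l (nhds a) → Tendsto G l (nhds a) := fun a hF => by
    simpa using hF.sub h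
  refine ⟨⟨fun ⟨a, hF⟩ => ⟨a, hGF a hF⟩, fun ⟨a, hG⟩ => ⟨a, ?_⟩⟩, hGF⟩
  simpa using hG.add h

theorem bounded_reflected_convolution_restriction_general (d : ℕ)
    (A : ℕ → Set (EuclideanSpace ℝ (Fin d)))
    (hbdd : ∀ n, Bornology.IsBounded (A n))
    (hmeas : ∀ n, MeasurableSet (A n))
    (hFolner : ∀ u : EuclideanSpace ℝ (Fin d),
      Tendsto (fun n => volume ((A n) ∆ (u +ᵥ A n)) / volume (A n)) atTop (nhds 0))
    (f g : EuclideanSpace ℝ (Fin d) → ℂ)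
    (hf : MemLp f ⊤ volume) (hg : MemLp g ⊤ volume)
    (x : EuclideanSpace ℝ (Fin d)) :
    ((∃ l : ℂ, Tendsto (fun n =>
        (((volume (A n)).toReal⁻¹ : ℝ) : ℂ) *
          ∫ s in A n, f s * (starRingEnd ℂ) (g (s - x))) atTop (nhds l)) ↔
      (∃ l : ℂ, Tendsto (fun n =>
        (((volume (A n)).toReal⁻¹ : ℝ) : ℂ) *
          ∫ s, (A n).indicator f s * (starRingEnd ℂ) ((A n).indicator g (s - x)))
        atTop (nhds l))) ∧
    (∀ l : ℂ, Tendsto (fun n =>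
        (((volume (A n)).toReal⁻¹ : ℝ) : ℂ) *
          ∫ s in A n, f s * (starRingEnd ℂ) (g (s - x))) atTop (nhds l) →
      Tendsto (fun n =>
        (((volume (A n)).toReal⁻¹ : ℝ) : ℂ) *
          ∫ s, (A n).indicator f s * (starRingEnd ℂ) ((A n).indicator g (s - x)))
        atTop (nhds l)) := by
  have hdiff : Tendsto (fun n => volume (A n \ (x +ᵥ A n)) / volume (A n)) atTop (nhds 0) :=
    tendsto_of_tendsto_of_tendsto_of_le_of_le tendsto_const_nhds (hFolner x)
      (fun _ => zero_le) (fun n => ENNReal.div_le_div_right (measure_mono le_sup_left) _)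
  refine exists_tendsto_iff_and_tendsto_of_tendsto_sub_nhds_zero (squeeze_zero_norm (fun n =>
    norm_average_mul_conj_sub_average_indicator_le hf hg (hmeas n) (hbdd n).measure_lt_top.ne x) ?_)
  simpa using ((ENNReal.tendsto_toReal ENNReal.zero_ne_top).comp hdiff).const_mul
    (lpNorm (fun s => f s * starRingEnd ℂ (g (s - x))) ⊤ volume)

/-- For essentially bounded measurable `f, g : ℝ^d → ℂ` and a Følner sequence `(A n)`,
the averaged correlation over `A n` (restricting only `f`) converges iff the averaged
correlation of the restrictions `1_{A n} f` and `1_{A n} g` converges, and in that case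
the limits coincide. -/
theorem bounded_reflected_convolution_restriction (d : ℕ)
    (A : ℕ → Set (EuclideanSpace ℝ (Fin d)))
    (hbdd : ∀ n, Bornology.IsBounded (A n))
    (hmeas : ∀ n, MeasurableSet (A n))
    (hpos : ∀ n, 0 < volume (A n))
    (hFolner : ∀ u : EuclideanSpace ℝ (Fin d),
      Tendsto (fun n => volume ((A n) ∆ (u +ᵥ A n)) / volume (A n)) atTop (nhds 0))
    (f g : EuclideanSpace ℝ (Fin d) → ℂ)
    (hf : MemLp f ⊤ volume) (hg : MemLp g ⊤ volume)
    (x : EuclideanSpace ℝ (Fin d)) :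
    ((∃ l : ℂ, Tendsto (fun n =>
        (((volume (A n)).toReal⁻¹ : ℝ) : ℂ) *
          ∫ s in A n, f s * (starRingEnd ℂ) (g (s - x))) atTop (nhds l)) ↔
      (∃ l : ℂ, Tendsto (fun n =>
        (((volume (A n)).toReal⁻¹ : ℝ) : ℂ) *
          ∫ s, (A n).indicator f s * (starRingEnd ℂ) ((A n).indicator g (s - x)))
        atTop (nhds l))) ∧
    (∀ l : ℂ, Tendsto (fun n =>
        (((volume (A n)).toReal⁻¹ : ℝ) : ℂ) *
          ∫ s in A n, f s * (starRingEnd ℂ) (g (s - x))) atTop (nhds l) →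
      Tendsto (fun n =>
        (((volume (A n)).toReal⁻¹ : ℝ) : ℂ) *
          ∫ s, (A n).indicator f s * (starRingEnd ℂ) ((A n).indicator g (s - x)))
        atTop (nhds l)) :=
  bounded_reflected_convolution_restriction_general d A hbdd hmeas hFolner f g hf hg x
end

section
/- Let (A_n) be a van Hove sequence, f, g ∈ L^∞(ℝ^d) with finite Besicovitch 2-seminorms. If the reflected Eberlein convolution ⟨f, g⟩ along (A_n) exists, then sup_x |⟨f, g⟩(x)| ≤ ‖f‖_{b,2} · ‖g‖_{b,2}, where ‖f‖_{b,2} = limsup_n ((1/vol(A_n)) ∫_{A_n} |f|²)^{1/2}. -/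
open MeasureTheory Filter Topology
open scoped Pointwise

/-!
For each `n`, Cauchy–Schwarz bounds the `n`-th Eberlein average by the root mean squares on `A n`
of `f` and of the translate `g (· - x)`. Translation changes the mean square of `g` only through
the part of `A n - x` lying outside `A n`, where `|g|² ≤ ‖g‖∞²`; that part lies in the van Hove
boundary of `A n` with respect to `{-x}`, so its relative measure tends to zero, and the bound
survives passing to the limsup.
-/

section CauchySchwarz

variable {α 𝕜 : Type*} [MeasurableSpace α] [RCLike 𝕜] {f g : α → 𝕜}

lemma norm_integral_mul_conj_le {μ : Measure α} (hf : MemLp f 2 μ) (hg : MemLp g 2 μ) :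
    ‖∫ s, f s * starRingEnd 𝕜 (g s) ∂μ‖ ≤ √(∫ s, ‖f s‖ ^ 2 ∂μ) * √(∫ s, ‖g s‖ ^ 2 ∂μ) := by
  have holder := integral_mul_norm_le_Lp_mul_Lq Real.HolderConjugate.two_two
    (by simpa using hf) (by simpa using hg)
  simp only [Real.rpow_two, ← Real.sqrt_eq_rpow] at holder
  calc ‖∫ s, f s * starRingEnd 𝕜 (g s) ∂μ‖ ≤ ∫ s, ‖f s‖ * ‖g s‖ ∂μ := by
        refine (norm_integral_le_integral_norm _).trans_eq ?_
        simp only [norm_mul, RCLike.norm_conj]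
    _ ≤ _ := holder

lemma norm_setAverage_mul_conj_le {μ : Measure α} {A : Set α} (hA : μ A ≠ 0)
    (hf : MemLp f 2 (μ.restrict A)) (hg : MemLp g 2 (μ.restrict A)) :
    ‖⨍ s in A, f s * starRingEnd 𝕜 (g s) ∂μ‖ ≤
      √(⨍ s in A, ‖f s‖ ^ 2 ∂μ) * √(⨍ s in A, ‖g s‖ ^ 2 ∂μ) := by
  have hc : (μ A)⁻¹ ≠ ⊤ := ENNReal.inv_ne_top.2 hA
  simp only [setAverage_eq']
  exact norm_integral_mul_conj_le (hf.smul_measure hc) (hg.smul_measure hc)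

end CauchySchwarz

section Translation

variable {α : Type*} [MeasurableSpace α] [AddGroup α] [MeasurableAdd α]
  {μ : Measure α} [μ.IsAddRightInvariant] {φ : α → ℝ} {M : ℝ} {A : Set α}

lemma setIntegral_comp_sub_le (hφ₀ : 0 ≤ φ) (hφM : ∀ᵐ s ∂μ, φ s ≤ M)
    (hφ : AEStronglyMeasurable φ μ) (hA : MeasurableSet A) (hAfin : μ A ≠ ⊤) (x : α) :
    ∫ s in A, φ (s - x) ∂μ ≤ ∫ s in A, φ s ∂μ + M * μ.real ((· + x) ⁻¹' A \ A) := by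
  set B := (· + x) ⁻¹' A
  have hBfin : μ B ≠ ⊤ := by
    rwa [(measurePreserving_add_right μ x).measure_preimage hA.nullMeasurableSet]
  have hφbdd : ∀ᵐ s ∂μ, ‖φ s‖ ≤ M := by
    filter_upwards [hφM] with s hs
    rwa [Real.norm_of_nonneg (hφ₀ s)]
  have hint : ∀ {U}, μ U ≠ ⊤ → IntegrableOn φ U μ := fun hU =>
    Measure.integrableOn_of_bounded hU hφ (ae_restrict_of_ae hφbdd)
  have hshift : ∫ s in A, φ (s - x) ∂μ = ∫ t in B, φ t ∂μ := by
    have hA' : A = (· - x) ⁻¹' B := by ext s; simp [B]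
    conv_lhs => rw [hA']
    exact (measurePreserving_sub_right μ x).setIntegral_preimage_emb
      (MeasurableEquiv.subRight x).measurableEmbedding φ B
  have hinter : ∫ t in B ∩ A, φ t ∂μ ≤ ∫ t in A, φ t ∂μ :=
    setIntegral_mono_set (hint hAfin) (Eventually.of_forall fun t => hφ₀ t)
      (Eventually.of_forall Set.inter_subset_right)
  have hsdiff : ∫ t in B \ A, φ t ∂μ ≤ M * μ.real (B \ A) := by
    have hDfin : μ (B \ A) ≠ ⊤ := measure_ne_top_of_subset Set.sdiff_subset hBfin
    calc ∫ t in B \ A, φ t ∂μ ≤ ∫ _ in B \ A, M ∂μ :=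
          setIntegral_mono_ae (hint hDfin) (integrableOn_const hDfin) hφM
      _ = M * μ.real (B \ A) := by rw [setIntegral_const, smul_eq_mul, mul_comm]
  rw [hshift, ← integral_inter_add_sdiff hA (hint hBfin)]
  exact add_le_add hinter hsdiff

lemma setAverage_comp_sub_le (hφ₀ : 0 ≤ φ) (hφM : ∀ᵐ s ∂μ, φ s ≤ M)
    (hφ : AEStronglyMeasurable φ μ) (hA : MeasurableSet A) (hAfin : μ A ≠ ⊤) (x : α) :
    ⨍ s in A, φ (s - x) ∂μ ≤
      ⨍ s in A, φ s ∂μ + M * (μ ((· + x) ⁻¹' A \ A) / μ A).toReal := by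
  simp only [setAverage_eq, smul_eq_mul, ENNReal.toReal_div, ← measureReal_def]
  calc (μ.real A)⁻¹ * ∫ s in A, φ (s - x) ∂μ
      ≤ (μ.real A)⁻¹ * (∫ s in A, φ s ∂μ + M * μ.real ((· + x) ⁻¹' A \ A)) :=
        mul_le_mul_of_nonneg_left (setIntegral_comp_sub_le hφ₀ hφM hφ hA hAfin x)
          (inv_nonneg.2 measureReal_nonneg)
    _ = _ := by ring

end Translation

section VanHove

variable {E : Type*} [TopologicalSpace E] [AddCommGroup E]

/-- The set `∂ᴷ A` whose relative measure tends to zero in the van Hove condition. -/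
def vanHoveBoundary (K A : Set E) : Set E :=
  ((K + A) \ interior A) ∪ ((-K + closure Aᶜ) ∩ A)

lemma preimage_add_const_sdiff_subset_vanHoveBoundary (x : E) (A : Set E) :
    (· + x) ⁻¹' A \ A ⊆ vanHoveBoundary {-x} A := by
  rintro t ⟨htx, htA⟩
  exact Or.inl ⟨⟨-x, rfl, t + x, htx, by simp [add_comm t]⟩, fun ht => htA (interior_subset ht)⟩

lemma tendsto_measure_preimage_add_const_sdiff_div [MeasurableSpace E] {μ : Measure E}
    {ι : Type*} {l : Filter ι} {A : ι → Set E} (x : E)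
    (hA : Tendsto (fun n => μ (vanHoveBoundary {-x} (A n)) / μ (A n)) l (𝓝 0)) :
    Tendsto (fun n => μ ((· + x) ⁻¹' A n \ A n) / μ (A n)) l (𝓝 0) :=
  tendsto_of_tendsto_of_tendsto_of_le_of_le tendsto_const_nhds hA (fun _ => zero_le)
    fun n => ENNReal.div_le_div_right
      (measure_mono (preimage_add_const_sdiff_subset_vanHoveBoundary x (A n))) _

end VanHove

lemma norm_le_limsup_mul_limsup_of_tendsto {ι E : Type*} [SeminormedAddCommGroup E]
    {l : Filter ι} [l.NeBot] {u : ι → E} {L : E} {F G e : ι → ℝ} (hu : Tendsto u l (𝓝 L))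
    (hF₀ : 0 ≤ F) (hG₀ : 0 ≤ G) (hF : IsBoundedUnder (· ≤ ·) l F)
    (hG : IsBoundedUnder (· ≤ ·) l G) (he₀ : 0 ≤ e) (he : Tendsto e l (𝓝 0))
    (hu_le : ∀ n, ‖u n‖ ≤ F n * (G n + e n)) :
    ‖L‖ ≤ limsup F l * limsup G l := by
  have hGe₀ : 0 ≤ᶠ[l] G + e := Eventually.of_forall fun n => add_nonneg (hG₀ n) (he₀ n)
  have hGe : IsBoundedUnder (· ≤ ·) l (G + e) := isBoundedUnder_le_add hG he.isBoundedUnder_le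
  calc ‖L‖ = limsup (fun n => ‖u n‖) l := hu.norm.limsup_eq.symm
    _ ≤ limsup (F * (G + e)) l := limsup_le_limsup (Eventually.of_forall hu_le)
        hu.norm.isCoboundedUnder_le
        (isBoundedUnder_le_mul_of_nonneg (Frequently.of_forall hF₀) hF hGe₀ hGe)
    _ ≤ limsup F l * limsup (G + e) l :=
        limsup_mul_le (Frequently.of_forall hF₀) hF hGe₀ hGe
    _ ≤ limsup F l * (limsup G l + limsup e l) := by
        gcongr
        · exact le_limsup_of_frequently_le (Frequently.of_forall hF₀) hF
        · exact limsup_add_le (isBoundedUnder_of_eventually_ge (Eventually.of_forall hG₀)) hG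
            he.isCoboundedUnder_le he.isBoundedUnder_le
    _ = limsup F l * limsup G l := by rw [he.limsup_eq, add_zero]

lemma sqrt_add_le_add_sqrt {a b : ℝ} (ha : 0 ≤ a) (hb : 0 ≤ b) : √(a + b) ≤ √a + √b := by
  simpa only [← Real.sqrt_eq_rpow] using
    Real.rpow_add_le_add_rpow ha hb (by norm_num : (0 : ℝ) ≤ 1 / 2) (by norm_num)

lemma norm_setAverage_mul_conj_comp_sub_le {α 𝕜 : Type*} [MeasurableSpace α] [AddGroup α]
    [MeasurableAdd α] [RCLike 𝕜] {μ : Measure α} [μ.IsAddRightInvariant] {f g : α → 𝕜}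
    {C : ℝ} {A : Set α} (hf : MemLp f ⊤ μ) (hg : MemLp g ⊤ μ) (hC : ∀ᵐ s ∂μ, ‖g s‖ ≤ C)
    (hA : MeasurableSet A) (hA₀ : μ A ≠ 0) (hAfin : μ A ≠ ⊤) (x : α) :
    ‖⨍ s in A, f s * starRingEnd 𝕜 (g (s - x)) ∂μ‖ ≤
      √(⨍ s in A, ‖f s‖ ^ 2 ∂μ) *
        (√(⨍ s in A, ‖g s‖ ^ 2 ∂μ) + √(C ^ 2 * (μ ((· + x) ⁻¹' A \ A) / μ A).toReal)) := by
  have := isFiniteMeasure_restrict.2 hAfin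
  have hgx : MemLp (fun s => g (s - x)) ⊤ μ :=
    hg.comp_measurePreserving (measurePreserving_sub_right μ x)
  have hmean := setAverage_comp_sub_le (φ := fun t => ‖g t‖ ^ 2) (fun _ => sq_nonneg _)
    (hC.mono fun s hs => pow_le_pow_left₀ (norm_nonneg _) hs 2) (hg.1.norm.pow 2) hA hAfin x
  have hmean₀ : 0 ≤ ⨍ s in A, ‖g s‖ ^ 2 ∂μ := by
    rw [setAverage_eq]; exact smul_nonneg (by positivity) (integral_nonneg fun _ => by positivity)
  calc _ ≤ √(⨍ s in A, ‖f s‖ ^ 2 ∂μ) * √(⨍ s in A, ‖g (s - x)‖ ^ 2 ∂μ) :=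
        norm_setAverage_mul_conj_le hA₀ ((hf.restrict A).mono_exponent le_top)
          ((hgx.restrict A).mono_exponent le_top)
    _ ≤ _ := by
        gcongr
        exact (Real.sqrt_le_sqrt hmean).trans (sqrt_add_le_add_sqrt hmean₀ (by positivity))

lemma inv_mul_setIntegral_eq_setAverage {α : Type*} [MeasurableSpace α] (μ : Measure α)
    (A : Set α) (φ : α → ℝ) : (μ A).toReal⁻¹ * ∫ s in A, φ s ∂μ = ⨍ s in A, φ s ∂μ :=
  (setAverage_eq μ φ A).symm

/-- Cauchy–Schwarz bound for the reflected Eberlein convolution: for a van Hove sequence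
`(A n)` and essentially bounded `f, g` with finite Besicovitch 2-seminorms, if the
reflected Eberlein convolution `⟨f, g⟩` exists (with pointwise limit `h`), then
`|h x| ≤ ‖f‖_{b,2} ‖g‖_{b,2}` for all `x`. -/
theorem reflected_Eberlein_Cauchy_Schwarz (d : ℕ)
    (A : ℕ → Set (EuclideanSpace ℝ (Fin d)))
    (hbdd : ∀ n, Bornology.IsBounded (A n))
    (hmeas : ∀ n, MeasurableSet (A n))
    (hpos : ∀ n, 0 < volume (A n))
    (hvH : ∀ K : Set (EuclideanSpace ℝ (Fin d)), IsCompact K →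
      Tendsto (fun n =>
          volume (((K + A n) \ interior (A n)) ∪ (((-K) + closure ((A n)ᶜ)) ∩ A n)) /
            volume (A n))
        atTop (nhds 0))
    (f g : EuclideanSpace ℝ (Fin d) → ℂ)
    (hf : MemLp f ⊤ volume) (hg : MemLp g ⊤ volume)
    (hfB : IsBoundedUnder (· ≤ ·) atTop (fun n =>
      ((volume (A n)).toReal⁻¹ * ∫ s in A n, ‖f s‖ ^ 2) ^ ((1 : ℝ) / 2)))
    (hgB : IsBoundedUnder (· ≤ ·) atTop (fun n =>
      ((volume (A n)).toReal⁻¹ * ∫ s in A n, ‖g s‖ ^ 2) ^ ((1 : ℝ) / 2)))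
    (h : EuclideanSpace ℝ (Fin d) → ℂ)
    (hconv : ∀ x, Tendsto (fun n =>
        (((volume (A n)).toReal⁻¹ : ℝ) : ℂ) *
          ∫ s in A n, f s * (starRingEnd ℂ) (g (s - x))) atTop (nhds (h x))) :
    ∀ x, ‖h x‖ ≤
      (limsup (fun n =>
          ((volume (A n)).toReal⁻¹ * ∫ s in A n, ‖f s‖ ^ 2) ^ ((1 : ℝ) / 2)) atTop) *
        (limsup (fun n =>
          ((volume (A n)).toReal⁻¹ * ∫ s in A n, ‖g s‖ ^ 2) ^ ((1 : ℝ) / 2)) atTop) := by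
  intro x
  obtain ⟨C, hC⟩ := eLpNormEssSup_lt_top_iff_isBoundedUnder.1
    (eLpNorm_exponent_top (f := g) ▸ hg.eLpNorm_lt_top)
  have hdefect : Tendsto (fun n =>
      √((C : ℝ) ^ 2 * (volume ((· + x) ⁻¹' A n \ A n) / volume (A n)).toReal)) atTop (𝓝 0) := by
    have hratio := (ENNReal.tendsto_toReal ENNReal.zero_ne_top).comp
      (tendsto_measure_preimage_add_const_sdiff_div x (hvH {-x} isCompact_singleton))
    have := (hratio.const_mul ((C : ℝ) ^ 2)).sqrt
    rwa [ENNReal.toReal_zero, mul_zero, Real.sqrt_zero] at this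
  simp only [inv_mul_setIntegral_eq_setAverage, ← Real.sqrt_eq_rpow] at hfB hgB ⊢
  refine norm_le_limsup_mul_limsup_of_tendsto ((hconv x).congr fun n => ?_)
    (fun _ => Real.sqrt_nonneg _) (fun _ => Real.sqrt_nonneg _) hfB hgB
    (fun _ => Real.sqrt_nonneg _) hdefect fun n => norm_setAverage_mul_conj_comp_sub_le hf hg
      (hC.mono fun _ hs => NNReal.coe_le_coe.2 hs) (hmeas n) (hpos n).ne'
      (hbdd n).measure_lt_top.ne x
  rw [setAverage_eq, Complex.real_smul]; rfl
end

section
/- Let 1 ≤ p < ∞ and let f : ℝ → ℂ be an even locally p-integrable function with finite one-dimensional Besicovitch p-seminorm along intervals [-R, R]. Define F : ℝ^d → ℂ by F(x) = f(‖x‖). Then the d-dimensional Besicovitch p-seminorm of F along balls B_R satisfies ‖F‖_{b,p} ≤ d^{1/p} ‖f‖_{b,p,[-R,R]}. -/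
open MeasureTheory Filter Metric Set

/-- For an even locally `p`-integrable `f : ℝ → ℂ` with finite one-dimensional
Besicovitch `p`-seminorm along `[-R, R]`, the radial extension `F(x) = f(‖x‖)` on `ℝ^d`
satisfies `‖F‖_{b,p} ≤ d^{1/p} ‖f‖_{b,p}` (seminorms along balls resp. intervals). -/
theorem radial_Besicovitch_seminorm_bound (d : ℕ) (hd : 1 ≤ d) (p : ℝ) (hp : 1 ≤ p)
    (f : ℝ → ℂ) (heven : ∀ r : ℝ, f (-r) = f r)
    (hloc : ∀ R : ℝ, IntegrableOn (fun r => ‖f r‖ ^ p) (Set.Icc (-R) R) volume)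
    (hfin : IsBoundedUnder (· ≤ ·) atTop
      (fun R : ℝ => ((1 / (2 * R)) * ∫ r in (-R)..R, ‖f r‖ ^ p) ^ (1 / p))) :
    limsup (fun R : ℝ =>
        (((volume (Metric.ball (0 : EuclideanSpace ℝ (Fin d)) R)).toReal)⁻¹ *
          ∫ x in Metric.ball (0 : EuclideanSpace ℝ (Fin d)) R, ‖f ‖x‖‖ ^ p) ^ (1 / p))
      atTop
    ≤ (d : ℝ) ^ (1 / p) *
      limsup (fun R : ℝ => ((1 / (2 * R)) * ∫ r in (-R)..R, ‖f r‖ ^ p) ^ (1 / p)) atTop := by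
  haveI : Nontrivial (EuclideanSpace ℝ (Fin d)) :=
    Module.nontrivial_of_finrank_pos (R := ℝ)
      (by rw [finrank_euclideanSpace_fin]; omega)
  set E := EuclideanSpace ℝ (Fin d)
  set h : ℝ → ℝ := fun r => ‖f r‖ ^ p with hhdef
  have hp0 : 0 < p := lt_of_lt_of_le one_pos hp
  have hhnn : ∀ r, 0 ≤ h r := fun r => Real.rpow_nonneg (norm_nonneg _) _
  have hheven : ∀ r, h (-r) = h r := fun r => by simp [hhdef, heven r]
  set c : ℝ := (d : ℝ) ^ (1 / p) with hcdef
  have hcpos : 0 < c := Real.rpow_pos_of_pos (by exact_mod_cast Nat.lt_of_lt_of_le Nat.zero_lt_one hd) _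
  set v : ℝ → ℝ := fun R => ((1 / (2 * R)) * ∫ r in (-R)..R, h r) ^ (1 / p) with hvdef
  set u : ℝ → ℝ := fun R =>
      (((volume (Metric.ball (0 : E) R)).toReal)⁻¹ *
        ∫ x in Metric.ball (0 : E) R, h ‖x‖) ^ (1 / p) with hudef
  -- nonnegativity of the inner expression defining v
  have hvbase : ∀ R : ℝ, 0 ≤ (1 / (2 * R)) * ∫ r in (-R)..R, h r := by
    intro R
    rcases le_or_gt 0 R with hR | hR
    · exact mul_nonneg (by positivity)
        (intervalIntegral.integral_nonneg (by linarith) fun x _ => hhnn x)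
    · have h1 : (1 : ℝ) / (2 * R) ≤ 0 := by
        apply div_nonpos_of_nonneg_of_nonpos <;> nlinarith
      have h2 : (∫ r in (-R)..R, h r) ≤ 0 := by
        rw [intervalIntegral.integral_symm]
        simp only [neg_nonpos]
        exact intervalIntegral.integral_nonneg (by linarith) fun x _ => hhnn x
      nlinarith [mul_nonneg (neg_nonneg.2 h1) (neg_nonneg.2 h2)]
  have hv0 : ∀ R, 0 ≤ v R := fun R => Real.rpow_nonneg (hvbase R) _
  have hu0 : ∀ R, 0 ≤ u R := by
    intro R
    apply Real.rpow_nonneg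
    apply mul_nonneg (by positivity)
    exact integral_nonneg fun x => hhnn _
  -- the key pointwise bound
  have key : ∀ R : ℝ, 0 < R → u R ≤ c * v R := by
    intro R hR
    have hB : 0 < (volume (ball (0:E) 1)).toReal :=
      ENNReal.toReal_pos (measure_ball_pos volume _ one_pos).ne' measure_ball_lt_top.ne
    set B := (volume (ball (0:E) 1)).toReal with hBdef
    have hvol : (volume (ball (0:E) R)).toReal = R ^ d * B := by
      rw [Measure.addHaar_ball volume (0:E) hR.le, ENNReal.toReal_mul,
        ENNReal.toReal_ofReal (by positivity), finrank_euclideanSpace_fin]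
    have hpolar : (∫ x in ball (0:E) R, h ‖x‖) =
        (d : ℝ) * (B * ∫ y in Ioo (0:ℝ) R, y ^ (d - 1) * h y) := by
      have h1 : (∫ x in ball (0:E) R, h ‖x‖)
          = ∫ x : E, (Set.indicator (Set.Iio R) h) ‖x‖ := by
        rw [← integral_indicator measurableSet_ball]
        congr 1 with x
        rw [← Set.indicator_comp_right (fun x : E => ‖x‖) (s := Set.Iio R) (g := h)]
        congr 1
        ext y
        simp [mem_ball_zero_iff]
      rw [h1, integral_fun_norm_addHaar volume (Set.indicator (Set.Iio R) h)]
      have hdim : Module.finrank ℝ E = d := finrank_euclideanSpace_fin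
      rw [hdim]
      simp only [nsmul_eq_mul, smul_eq_mul]
      congr 2
      have hind : ∀ y : ℝ, y ^ (d-1) * (Set.indicator (Set.Iio R) h) y
          = Set.indicator (Set.Iio R) (fun y => y ^ (d-1) * h y) y := by
        intro y
        exact (Set.indicator_mul_right (M₀ := ℝ) (i := y) (Set.Iio R)
          (fun y : ℝ => y ^ (d-1)) h).symm
      simp_rw [hind]
      rw [setIntegral_indicator measurableSet_Iio, Set.Ioi_inter_Iio]
    have hIoo : IntegrableOn h (Ioo 0 R) volume :=
      (hloc R).mono_set (fun x hx => ⟨by linarith [hx.1], hx.2.le⟩)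
    have hmeas : AEStronglyMeasurable (fun y => y ^ (d-1) * h y)
        (volume.restrict (Ioo 0 R)) :=
      (measurable_id.pow_const _).aestronglyMeasurable.mul hIoo.aestronglyMeasurable
    have hk : IntegrableOn (fun y => y ^ (d-1) * h y) (Ioo 0 R) volume := by
      refine Integrable.mono' (hIoo.const_mul (R ^ (d-1))) hmeas ?_
      filter_upwards [ae_restrict_mem measurableSet_Ioo] with y hy
      rw [Real.norm_eq_abs,
        abs_of_nonneg (mul_nonneg (pow_nonneg hy.1.le _) (hhnn y))]
      exact mul_le_mul_of_nonneg_right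
        (pow_le_pow_left₀ hy.1.le hy.2.le _) (hhnn y)
    have hIle : (∫ y in Ioo (0:ℝ) R, y ^ (d-1) * h y)
        ≤ R ^ (d-1) * ∫ y in Ioo (0:ℝ) R, h y := by
      rw [← MeasureTheory.integral_const_mul]
      refine setIntegral_mono_on hk (hIoo.const_mul _) measurableSet_Ioo fun y hy => ?_
      exact mul_le_mul_of_nonneg_right (pow_le_pow_left₀ hy.1.le hy.2.le _) (hhnn y)
    have hIoo_eq : (∫ y in Ioo (0:ℝ) R, h y) = ∫ r in (0:ℝ)..R, h r := by
      rw [intervalIntegral.integral_of_le hR.le, integral_Ioc_eq_integral_Ioo]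
    have hint1 : IntervalIntegrable h volume (-R) 0 := by
      apply IntegrableOn.intervalIntegrable
      rw [Set.uIcc_of_le (by linarith : -R ≤ (0:ℝ))]
      exact (hloc R).mono_set (Set.Icc_subset_Icc le_rfl hR.le)
    have hint2 : IntervalIntegrable h volume 0 R := by
      apply IntegrableOn.intervalIntegrable
      rw [Set.uIcc_of_le hR.le]
      exact (hloc R).mono_set (Set.Icc_subset_Icc (by linarith) le_rfl)
    have heq2 : (∫ r in (-R)..R, h r) = 2 * ∫ r in (0:ℝ)..R, h r := by
      rw [← intervalIntegral.integral_add_adjacent_intervals hint1 hint2]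
      have hrefl : (∫ r in (-R)..(0:ℝ), h r) = ∫ r in (0:ℝ)..R, h r := by
        have := intervalIntegral.integral_comp_neg (a := (0:ℝ)) (b := R) h
        simp_rw [hheven] at this
        rw [neg_zero] at this
        exact this.symm
      rw [hrefl]; ring
    have hJ : 0 ≤ ∫ r in (0:ℝ)..R, h r :=
      intervalIntegral.integral_nonneg hR.le fun x _ => hhnn x
    have hRd : R ^ d = R ^ (d-1) * R := by
      rw [← pow_succ]; congr 1; omega
    have hbase : ((volume (ball (0:E) R)).toReal)⁻¹ * (∫ x in ball (0:E) R, h ‖x‖)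
        ≤ (d:ℝ) * ((1/(2*R)) * ∫ r in (-R)..R, h r) := by
      rw [hvol, hpolar, heq2]
      calc (R^d*B)⁻¹ * ((d:ℝ) * (B * ∫ y in Ioo (0:ℝ) R, y ^ (d-1) * h y))
          ≤ (R^d*B)⁻¹ * ((d:ℝ) * (B * (R^(d-1) * ∫ r in (0:ℝ)..R, h r))) := by
            apply mul_le_mul_of_nonneg_left ?_ (by positivity)
            apply mul_le_mul_of_nonneg_left ?_ (by positivity)
            exact mul_le_mul_of_nonneg_left (hIle.trans_eq (by rw [hIoo_eq])) hB.le
        _ = (d:ℝ) * ((1/(2*R)) * (2 * ∫ r in (0:ℝ)..R, h r)) := by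
            rw [hRd]
            have hR0 : R ≠ 0 := hR.ne'
            have hB0 : B ≠ 0 := hB.ne'
            have hRp : R ^ (d-1) ≠ 0 := pow_ne_zero _ hR0
            field_simp
    have hru : u R ≤ ((d:ℝ) * ((1/(2*R)) * ∫ r in (-R)..R, h r)) ^ (1/p) :=
      Real.rpow_le_rpow
        (mul_nonneg (by positivity) (integral_nonneg fun x => hhnn _)) hbase
        (by positivity)
    refine hru.trans_eq ?_
    rw [Real.mul_rpow (by positivity) (hvbase R)]
  have hbdd : IsBoundedUnder (· ≤ ·) atTop (fun R => c * v R) := by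
    obtain ⟨b, hb⟩ := hfin
    rw [eventually_map] at hb
    exact ⟨c * b, eventually_map.2 <| hb.mono fun R hRb =>
      mul_le_mul_of_nonneg_left hRb hcpos.le⟩
  have hco : IsCoboundedUnder (· ≤ ·) atTop u :=
    isCoboundedUnder_le_of_le atTop (x := 0) hu0
  calc limsup u atTop ≤ limsup (fun R => c * v R) atTop := by
        refine limsup_le_limsup ?_ hco hbdd
        filter_upwards [eventually_gt_atTop (0:ℝ)] with R hR using key R hR
    _ = c * limsup v atTop := by
        refine ((OrderIso.mulLeft₀ c hcpos).limsup_apply hfin ?_ ?_ ?_).symm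
        · exact isCoboundedUnder_le_of_le atTop (x := 0) hv0
        · exact hbdd
        · exact isCoboundedUnder_le_of_le atTop (x := 0)
            fun R => mul_nonneg hcpos.le (hv0 R)
end

section
/- For a ≠ b real and d ≥ 1, the mean of the product of radial exponentials vanishes: lim_{R→∞} (d/R^d) ∫_0^R e^{2πi(a−b)r} r^{d−1} dr = 0, while for a = b this limit equals 1. Consequently, the classes of the functions x ↦ e^{2πi a‖x‖}, a ∈ ℝ, are orthonormal with respect to the inner product ⟨F, G⟩ = lim_{R→∞} (1/vol(B_R)) ∫_{B_R} F conj(G) dλ on ℝ^d. -/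
open MeasureTheory Filter Classical

/-!
Rescaling `r = R t` turns `(d / R^d) ∫_0^R e^{2πicr} r^{d-1} dr` into `d ∫_0^1 e^{2πicRt} t^{d-1} dt`,
which equals `1` when `c = 0` and tends to `0` as `R → ∞` when `c ≠ 0` by the Riemann–Lebesgue
lemma. Integrating in polar coordinates, the mean of `x ↦ g ‖x‖` over the ball of radius `R` is
`(d / R^d) ∫_0^R g(r) r^{d-1} dr`, and `e^{2πia‖x‖} conj(e^{2πib‖x‖}) = e^{2πi(a-b)‖x‖}`.
-/

open Set Metric Module intervalIntegral Real Topology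
open scoped FourierTransform

section RiemannLebesgue

variable {E : Type*} [NormedAddCommGroup E] [NormedSpace ℂ E]

theorem tendsto_setIntegral_fourierChar_smul (f : ℝ → E) {s : Set ℝ} (hs : MeasurableSet s) :
    Tendsto (fun w : ℝ => ∫ t in s, 𝐞 (w * t) • f t) (cocompact ℝ) (𝓝 0) := by
  refine ((Real.tendsto_integral_exp_smul_cocompact (s.indicator f)).comp
    (Homeomorph.neg ℝ).isClosedEmbedding.tendsto_cocompact).congr fun w => ?_
  rw [Function.comp_apply, ← MeasureTheory.integral_indicator hs]
  congr 1 with t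
  by_cases ht : t ∈ s <;> simp [ht, mul_comm]

theorem tendsto_intervalIntegral_fourierChar_smul (f : ℝ → E) (a b : ℝ) :
    Tendsto (fun w : ℝ => ∫ t in a..b, 𝐞 (w * t) • f t) (cocompact ℝ) (𝓝 0) := by
  simpa only [intervalIntegral, sub_zero] using
    (tendsto_setIntegral_fourierChar_smul f measurableSet_Ioc).sub
      (tendsto_setIntegral_fourierChar_smul f measurableSet_Ioc)

end RiemannLebesgue

theorem tendsto_const_mul_atTop_cocompact {c : ℝ} (hc : c ≠ 0) :
    Tendsto (fun R : ℝ => c * R) atTop (cocompact ℝ) := by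
  rw [← cobounded_eq_cocompact, ← tendsto_norm_atTop_iff_cobounded]
  simp only [norm_mul, Real.norm_eq_abs]
  exact tendsto_abs_atTop_atTop.const_mul_atTop (abs_pos.2 hc)

section RadialMean

variable {F : Type*} [NormedAddCommGroup F] [NormedSpace ℝ F]

theorem integral_pow_smul_eq_pow_smul_integral_comp_mul (g : ℝ → F) (n : ℕ) {R : ℝ}
    (hR : R ≠ 0) :
    ∫ r in 0..R, r ^ n • g r = R ^ (n + 1) • ∫ t in 0..1, t ^ n • g (R * t) := by
  have hscale := integral_comp_mul_left (a := 0) (b := 1) (fun r => r ^ n • g r) hR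
  simp only [mul_zero, mul_one, mul_pow, ← smul_smul, intervalIntegral.integral_smul] at hscale
  rw [pow_succ', mul_smul, hscale, smul_inv_smul₀ hR]

/-- The mean of `x ↦ g ‖x‖` over the ball of radius `R` in a `d`-dimensional space
(`average_ball_fun_norm_addHaar`). -/
noncomputable def radialMean (d : ℕ) (g : ℝ → F) (R : ℝ) : F :=
  ((d : ℝ) / R ^ d) • ∫ r in 0..R, r ^ (d - 1) • g r

theorem radialMean_eq_smul_integral_comp_mul (g : ℝ → F) {d : ℕ} (hd : 1 ≤ d) {R : ℝ}
    (hR : R ≠ 0) :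
    radialMean d g R = (d : ℝ) • ∫ t in 0..1, t ^ (d - 1) • g (R * t) := by
  obtain ⟨n, rfl⟩ : ∃ n, d = n + 1 := ⟨d - 1, by omega⟩
  rw [radialMean, Nat.add_sub_cancel, integral_pow_smul_eq_pow_smul_integral_comp_mul g n hR,
    smul_smul, div_mul_cancel₀ _ (pow_ne_zero _ hR)]

theorem radialMean_const [CompleteSpace F] (c : F) {d : ℕ} (hd : 1 ≤ d) {R : ℝ} (hR : R ≠ 0) :
    radialMean d (fun _ => c) R = c := by
  obtain ⟨n, rfl⟩ : ∃ n, d = n + 1 := ⟨d - 1, by omega⟩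
  rw [radialMean_eq_smul_integral_comp_mul _ hd hR, intervalIntegral.integral_smul_const,
    integral_pow, Nat.add_sub_cancel, smul_smul, one_pow, zero_pow n.succ_ne_zero, sub_zero,
    Nat.cast_succ, mul_one_div_cancel n.cast_add_one_ne_zero, one_smul]

end RadialMean

theorem tendsto_radialMean_fourierChar {d : ℕ} (hd : 1 ≤ d) (c : ℝ) :
    Tendsto (radialMean d fun r => (𝐞 (c * r) : ℂ)) atTop (𝓝 (if c = 0 then 1 else 0)) := by
  split_ifs with hc
  · refine tendsto_const_nhds.congr' ((eventually_ne_atTop 0).mono fun R hR => ?_)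
    simp only [hc, zero_mul, AddChar.map_zero_eq_one, Circle.coe_one]
    exact (radialMean_const (1 : ℂ) hd hR).symm
  · have hRL := ((tendsto_intervalIntegral_fourierChar_smul
      (fun t => ((t ^ (d - 1) : ℝ) : ℂ)) 0 1).comp (tendsto_const_mul_atTop_cocompact hc)).const_smul
      (d : ℝ)
    rw [smul_zero] at hRL
    refine hRL.congr' ((eventually_ne_atTop 0).mono fun R hR => ?_)
    rw [radialMean_eq_smul_integral_comp_mul _ hd hR, Function.comp_apply]
    congr 1
    refine intervalIntegral.integral_congr fun t _ => ?_
    rw [Circle.smul_def, smul_eq_mul, Complex.real_smul, mul_comm, mul_assoc]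

section Polar

variable {E F : Type*} [NormedAddCommGroup E] [NormedSpace ℝ E] [FiniteDimensional ℝ E]
  [Nontrivial E] [MeasurableSpace E] [BorelSpace E] [NormedAddCommGroup F] [NormedSpace ℝ F]
  (μ : Measure E) [μ.IsAddHaarMeasure]

theorem setIntegral_ball_fun_norm_addHaar (g : ℝ → F) {R : ℝ} (hR : 0 ≤ R) :
    ∫ x in ball (0 : E) R, g ‖x‖ ∂μ =
      finrank ℝ E • μ.real (ball 0 1) • ∫ r in 0..R, r ^ (finrank ℝ E - 1) • g r := by
  have hind : (ball (0 : E) R).indicator (fun x => g ‖x‖) = fun x => (Iio R).indicator g ‖x‖ := by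
    ext x
    by_cases h : ‖x‖ < R <;> simp [indicator, h]
  rw [← MeasureTheory.integral_indicator measurableSet_ball, hind, integral_fun_norm_addHaar,
    integral_of_le hR, ← Measure.restrict_congr_set Ioo_ae_eq_Ioc, ← Ioi_inter_Iio,
    ← setIntegral_indicator measurableSet_Iio]
  congr 3 with r
  by_cases h : r < R <;> simp [indicator, h]

theorem average_ball_fun_norm_addHaar (g : ℝ → F) {R : ℝ} (hR : 0 < R) :
    ⨍ x in ball (0 : E) R, g ‖x‖ ∂μ = radialMean (finrank ℝ E) g R := by
  have hball : μ.real (ball (0 : E) R) = R ^ finrank ℝ E * μ.real (ball 0 1) := by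
    rw [← μ.addHaar_real_closedBall_eq_addHaar_real_ball, μ.addHaar_real_closedBall _ hR.le]
  have hunit : μ.real (ball (0 : E) 1) ≠ 0 :=
    (ENNReal.toReal_pos (measure_ball_pos μ 0 one_pos).ne' measure_ball_lt_top.ne).ne'
  rw [setAverage_eq, setIntegral_ball_fun_norm_addHaar μ g hR.le, hball,
    ← Nat.cast_smul_eq_nsmul ℝ, smul_smul, smul_smul, radialMean]
  congr 1
  field_simp

end Polar

theorem fourierChar_mul_conj_fourierChar (x y : ℝ) :
    (𝐞 x : ℂ) * (starRingEnd ℂ) (𝐞 y : ℂ) = 𝐞 (x - y) := by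
  rw [← Circle.coe_inv_eq_conj, ← Circle.coe_mul, ← AddChar.map_neg_eq_inv,
    ← AddChar.map_add_eq_mul, sub_eq_add_neg]

theorem coe_fourierChar_eq_exp (x : ℝ) : (𝐞 x : ℂ) = Complex.exp (2 * π * Complex.I * x) := by
  rw [Real.fourierChar_apply]
  push_cast
  ring_nf

/-- The mean of a product of radial exponentials: for `a, b ∈ ℝ`,
`(d/R^d) ∫_0^R e^{2πi(a−b)r} r^{d−1} dr → 1` if `a = b` and `→ 0` if `a ≠ b`;
consequently the functions `x ↦ e^{2πi a‖x‖}` are orthonormal for the mean inner product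
`⟨F, G⟩ = lim_R (1/vol(B_R)) ∫_{B_R} F conj(G)` on `ℝ^d`. -/
theorem radial_exponentials_orthonormal (d : ℕ) (hd : 1 ≤ d) (a b : ℝ) :
    Tendsto (fun R : ℝ =>
        (((d : ℝ) / R ^ d : ℝ) : ℂ) *
          ∫ r in (0:ℝ)..R,
            Complex.exp (2 * Real.pi * Complex.I * (((a - b) * r : ℝ) : ℂ)) *
              ((r : ℂ) ^ (d - 1)))
      atTop (nhds (if a = b then 1 else 0)) ∧
    Tendsto (fun R : ℝ =>
        ((((volume (Metric.ball (0 : EuclideanSpace ℝ (Fin d)) R)).toReal)⁻¹ : ℝ) : ℂ) *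
          ∫ x in Metric.ball (0 : EuclideanSpace ℝ (Fin d)) R,
            Complex.exp (2 * Real.pi * Complex.I * ((a * ‖x‖ : ℝ) : ℂ)) *
              (starRingEnd ℂ)
                (Complex.exp (2 * Real.pi * Complex.I * ((b * ‖x‖ : ℝ) : ℂ))))
      atTop (nhds (if a = b then 1 else 0)) := by
  have : Nonempty (Fin d) := ⟨⟨0, hd⟩⟩
  have hmean := tendsto_radialMean_fourierChar hd (a - b)
  simp only [sub_eq_zero] at hmean
  simp only [← coe_fourierChar_eq_exp, fourierChar_mul_conj_fourierChar, ← sub_mul]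
  constructor
  · refine hmean.congr fun R => ?_
    simp only [radialMean, Complex.real_smul, Complex.ofReal_pow, mul_comm]
  · refine hmean.congr' ((eventually_gt_atTop 0).mono fun R hR => ?_)
    have hball := average_ball_fun_norm_addHaar (volume : Measure (EuclideanSpace ℝ (Fin d)))
      (fun r => (𝐞 ((a - b) * r) : ℂ)) hR
    rw [finrank_euclideanSpace_fin, setAverage_eq, measureReal_def, Complex.real_smul] at hball
    exact hball.symm
end
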